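/- arXiv:1106.3099 — 3 statements merged into one kernel-verified Lean document; each statement's English description precedes it below -/
import Mathlib

section
/- Let K be a field of characteristic different from 2 and 3 and L a field extension of K. Let a, b ∈ K with a ≠ 0, b ≠ 0 and 4a³ + 27b² ≠ 0, and let a′, b′ ∈ K with 4a′³ + 27b′² ≠ 0. If the base changes to L of E_{a,b} and E_{a′,b′} are isomorphic over L (related by an admissible change of variables over L), then there exists f ∈ Kˣ such that a′ = f²·a and b′ = f³·b, and f becomes a square in L. -/
/-! An admissible change of variables between short Weierstrass curves over a field in which
2 and 3 are nonzero has `r = s = t = 0`, so it multiplies `a` by `u⁻⁴` and `b` by `u⁻⁶`.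
Since `ab ≠ 0`, the element `f = ab'/(a'b)` of `K` maps to `u⁻²` in `L`, and `a' = f²a`,
`b' = f³b` then hold in `K` because `K → L` is injective. -/

namespace WeierstrassCurve

variable {R : Type*} [CommRing R]

instance isShortNF_mk (a₄ a₆ : R) : (⟨0, 0, 0, a₄, a₆⟩ : WeierstrassCurve R).IsShortNF :=
  ⟨rfl, rfl, rfl⟩

instance isShortNF_map {A : Type*} [CommRing A] (φ : R →+* A) (W : WeierstrassCurve R)
    [W.IsShortNF] : (W.map φ).IsShortNF :=
  ⟨by simp, by simp, by simp⟩

instance isShortNF_baseChange (A : Type*) [CommRing A] [Algebra R A] (W : WeierstrassCurve R)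
    [W.IsShortNF] : (W.baseChange A).IsShortNF :=
  isShortNF_map _ W

section ShortNF

variable [IsDomain R] {W W' : WeierstrassCurve R} [W.IsShortNF] [W'.IsShortNF]
  {C : VariableChange R}

theorem rst_eq_zero_of_smul_eq_of_isShortNF (h2 : (2 : R) ≠ 0) (h3 : (3 : R) ≠ 0)
    (h : C • W = W') : C.r = 0 ∧ C.s = 0 ∧ C.t = 0 := by
  have ha₁ := congrArg a₁ h
  have ha₂ := congrArg a₂ h
  have ha₃ := congrArg a₃ h
  simp only [variableChange_a₁, variableChange_a₂, variableChange_a₃, a₁_of_isShortNF,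
    a₂_of_isShortNF, a₃_of_isShortNF, ← Units.val_pow_eq_pow_val, Units.ne_zero, mul_zero,
    zero_add, add_zero, zero_sub, neg_zero, mul_eq_zero, h2, false_or] at ha₁ ha₂ ha₃
  simpa [ha₁, ha₃, h3] using ha₂

theorem a₄_a₆_of_smul_eq_of_isShortNF (h2 : (2 : R) ≠ 0) (h3 : (3 : R) ≠ 0)
    (h : C • W = W') : W'.a₄ = C.u⁻¹ ^ 4 * W.a₄ ∧ W'.a₆ = C.u⁻¹ ^ 6 * W.a₆ := by
  obtain ⟨hr, hs, ht⟩ := rst_eq_zero_of_smul_eq_of_isShortNF h2 h3 h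
  subst h
  simp [variableChange_a₄, variableChange_a₆, hr, hs, ht]

end ShortNF

end WeierstrassCurve

theorem exists_unit_of_algebraMap_eq_pow_mul {K L : Type*} [Field K] [Field L] [Algebra K L]
    {a b a' b' : K} (ha : a ≠ 0) (hb : b ≠ 0) {v : L} (hv : v ≠ 0)
    (h4 : algebraMap K L a' = v ^ 4 * algebraMap K L a)
    (h6 : algebraMap K L b' = v ^ 6 * algebraMap K L b) :
    ∃ f : Kˣ, a' = f ^ 2 * a ∧ b' = f ^ 3 * b ∧ algebraMap K L f = v ^ 2 := by
  have ha' : a' ≠ 0 := by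
    rintro rfl
    simp [hv, ha] at h4
  have hf : algebraMap K L (a * b' / (a' * b)) = v ^ 2 := by
    rw [map_div₀, map_mul, map_mul, h4, h6, div_eq_iff (by simp [hv, ha, hb])]
    ring
  have hf0 : a * b' / (a' * b) ≠ 0 := fun h0 ↦ pow_ne_zero 2 hv (by rw [← hf, h0, map_zero])
  refine ⟨Units.mk0 _ hf0, ?_, ?_, hf⟩ <;> apply (algebraMap K L).injective
  all_goals simp only [Units.val_mk0, map_mul, map_pow, hf, h4, h6]; ring

theorem stmt_4_general (K L : Type*) [Field K] [Field L] [Algebra K L]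
    (h2 : (2 : K) ≠ 0) (h3 : (3 : K) ≠ 0)
    (a b : K) (ha : a ≠ 0) (hb : b ≠ 0)
    (a' b' : K)
    (h : ∃ e : WeierstrassCurve.VariableChange L,
      e • ((⟨0, 0, 0, a, b⟩ : WeierstrassCurve K).baseChange L)
        = (⟨0, 0, 0, a', b'⟩ : WeierstrassCurve K).baseChange L) :
    ∃ f : Kˣ, a' = (f : K) ^ 2 * a ∧ b' = (f : K) ^ 3 * b ∧
      IsSquare (algebraMap K L (f : K)) := by
  obtain ⟨C, hC⟩ := h
  obtain ⟨h4, h6⟩ := WeierstrassCurve.a₄_a₆_of_smul_eq_of_isShortNF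
    (by simpa only [map_ofNat] using (map_ne_zero (algebraMap K L)).2 h2)
    (by simpa only [map_ofNat] using (map_ne_zero (algebraMap K L)).2 h3) hC
  obtain ⟨f, rfl, rfl, hf⟩ := exists_unit_of_algebraMap_eq_pow_mul ha hb (C.u⁻¹).ne_zero h4 h6
  exact ⟨f, rfl, rfl, _, hf.trans (sq _)⟩

/-- Let `K` be a field of characteristic different from 2 and 3 and `L` a field
extension of `K`. Let `a, b ∈ K` with `a ≠ 0`, `b ≠ 0` and `4a³ + 27b² ≠ 0`, and let
`a′, b′ ∈ K` with `4a′³ + 27b′² ≠ 0`. If the base changes to `L` of `E_{a,b}` and `E_{a′,b′}`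
are isomorphic over `L` (related by an admissible change of variables over `L`), then there
exists `f ∈ Kˣ` such that `a′ = f²·a` and `b′ = f³·b`, and `f` becomes a square in `L`. -/
theorem stmt_4 (K L : Type*) [Field K] [Field L] [Algebra K L]
    (h2 : (2 : K) ≠ 0) (h3 : (3 : K) ≠ 0)
    (a b : K) (ha : a ≠ 0) (hb : b ≠ 0) (hΔ : 4 * a ^ 3 + 27 * b ^ 2 ≠ 0)
    (a' b' : K) (hΔ' : 4 * a' ^ 3 + 27 * b' ^ 2 ≠ 0)
    (h : ∃ e : WeierstrassCurve.VariableChange L,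
      e • ((⟨0, 0, 0, a, b⟩ : WeierstrassCurve K).baseChange L)
        = (⟨0, 0, 0, a', b'⟩ : WeierstrassCurve K).baseChange L) :
    ∃ f : Kˣ, a' = (f : K) ^ 2 * a ∧ b' = (f : K) ^ 3 * b ∧
      IsSquare (algebraMap K L (f : K)) :=
  stmt_4_general K L h2 h3 a b ha hb a' b' h
end

section
/- Let K be a field of characteristic different from 2 and 3, let a, b ∈ K with a ≠ 0 and b ≠ 0, and let f, g ∈ Kˣ. Then the twisted curves E_{f²a, f³b} and E_{g²a, g³b} are isomorphic over K (related by an admissible change of variables over K) if and only if there exists c ∈ Kˣ with f = g·c². -/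
/-!
The invariant `c₆` of a Weierstrass curve transforms as `c₆ ↦ u⁻⁶ c₆` under every admissible
change of variables, and `c₆(E_{A,B}) = -864 B`. An isomorphism of the two twists therefore
gives `g³ b = u⁻⁶ f³ b`, so the unit `f / g` has a cube `(u³)²` that is a square; an element
whose cube is a square is itself a square, since `w = (w² / v)²` when `w³ = v²`.
Conversely, `f = g c²` is realised by the scaling `(x, y) ↦ (c² x, c³ y)`.
-/

theorem isSquare_of_pow_three_eq_sq {G : Type*} [CommGroup G] {w v : G} (h : w ^ 3 = v ^ 2) :
    IsSquare w :=
  ⟨w ^ 2 * v⁻¹, by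
    rw [← sq, mul_pow, inv_pow, ← h]
    group⟩

namespace WeierstrassCurve

variable {R : Type*} [CommRing R]

lemma c₆_mk_short (A B : R) : (⟨0, 0, 0, A, B⟩ : WeierstrassCurve R).c₆ = -864 * B := by
  simp only [c₆, b₂, b₄, b₆]
  ring

lemma scaling_smul_mk_short (u : Rˣ) (A B : R) :
    (⟨u, 0, 0, 0⟩ : VariableChange R) • (⟨0, 0, 0, A, B⟩ : WeierstrassCurve R) =
      ⟨0, 0, 0, (u⁻¹ : Rˣ) ^ 4 * A, (u⁻¹ : Rˣ) ^ 6 * B⟩ := by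
  ext <;> simp [variableChange_a₁, variableChange_a₂, variableChange_a₃, variableChange_a₄,
    variableChange_a₆]

end WeierstrassCurve

theorem stmt_6_general (K : Type*) [Field K] (h2 : (2 : K) ≠ 0) (h3 : (3 : K) ≠ 0)
    (a b : K) (hb : b ≠ 0) (f g : Kˣ) :
    (∃ e : WeierstrassCurve.VariableChange K,
      e • (⟨0, 0, 0, (f : K) ^ 2 * a, (f : K) ^ 3 * b⟩ : WeierstrassCurve K)
        = (⟨0, 0, 0, (g : K) ^ 2 * a, (g : K) ^ 3 * b⟩ : WeierstrassCurve K)) ↔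
      ∃ c : Kˣ, f = g * c ^ 2 := by
  constructor
  · rintro ⟨e, he⟩
    have hc₆ := congrArg WeierstrassCurve.c₆ he
    rw [WeierstrassCurve.variableChange_c₆, WeierstrassCurve.c₆_mk_short,
      WeierstrassCurve.c₆_mk_short] at hc₆
    have h864 : (-864 : K) ≠ 0 := by
      rw [show (-864 : K) = -(2 ^ 5 * 3 ^ 3) by norm_num]
      exact neg_ne_zero.mpr (mul_ne_zero (pow_ne_zero _ h2) (pow_ne_zero _ h3))
    have hg : g ^ 3 = e.u⁻¹ ^ 6 * f ^ 3 := by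
      refine Units.ext (mul_left_cancel₀ (mul_ne_zero h864 hb) ?_)
      push_cast at hc₆ ⊢
      linear_combination -hc₆
    have hcube : (f * g⁻¹) ^ 3 = (e.u ^ 3) ^ 2 := by
      rw [mul_pow, inv_pow, hg, mul_inv, inv_pow, inv_inv, ← pow_mul, mul_mul_inv_cancel'_right]
    obtain ⟨c, hc⟩ := (isSquare_iff_exists_sq _).mp (isSquare_of_pow_three_eq_sq hcube)
    exact ⟨c, by rw [← hc, mul_mul_inv_cancel'_right]⟩
  · rintro ⟨c, rfl⟩
    refine ⟨⟨c, 0, 0, 0⟩, ?_⟩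
    rw [WeierstrassCurve.scaling_smul_mk_short]
    congr 1 <;> push_cast <;> field_simp

/-- Let `K` be a field of characteristic different from 2 and 3, let
`a, b ∈ K` with `a ≠ 0` and `b ≠ 0`, and let `f, g ∈ Kˣ`. Then the twisted curves
`E_{f²a, f³b}` and `E_{g²a, g³b}` are isomorphic over `K` (related by an admissible change of
variables over `K`) if and only if there exists `c ∈ Kˣ` with `f = g·c²`. -/
theorem stmt_6 (K : Type*) [Field K] (h2 : (2 : K) ≠ 0) (h3 : (3 : K) ≠ 0)
    (a b : K) (ha : a ≠ 0) (hb : b ≠ 0) (f g : Kˣ) :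
    (∃ e : WeierstrassCurve.VariableChange K,
      e • (⟨0, 0, 0, (f : K) ^ 2 * a, (f : K) ^ 3 * b⟩ : WeierstrassCurve K)
        = (⟨0, 0, 0, (g : K) ^ 2 * a, (g : K) ^ 3 * b⟩ : WeierstrassCurve K)) ↔
      ∃ c : Kˣ, f = g * c ^ 2 :=
  stmt_6_general K h2 h3 a b hb f g
end

section
/- Let 𝔽_q be a finite field of odd cardinality q and let N ∈ 𝔽_q[T] be monic, squarefree, of degree ≥ 1. Then for every natural number e with e ≥ deg N, the complete character sum B_e = ∑_{f monic, deg f = e} (f/N) over all monic polynomials f ∈ 𝔽_q[T] of degree e vanishes: B_e = 0. -/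
open Polynomial

/-- The Legendre symbol `(f/π)` of `f ∈ 𝔽_q[T]` at a monic irreducible `π`: the quadratic
character of the residue field `𝔽_q[T]/(π)` evaluated at the image of `f`, i.e. `0` if the
image of `f` is zero, `1` if it is a nonzero square, and `-1` if it is a nonsquare. -/
noncomputable def polyLegendreSym {F : Type*} [Field F] [Fintype F] (π f : F[X]) : ℤ :=
  open scoped Classical in
  if (Ideal.Quotient.mk (Ideal.span {π}) f) = 0 then 0
  else if IsSquare (Ideal.Quotient.mk (Ideal.span {π}) f) then 1 else -1

/-- The Jacobi symbol `(f/N)` for a (monic squarefree) modulus `N ∈ 𝔽_q[T]`: the product over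
the distinct monic irreducible factors `π` of `N` of the quadratic character of the residue
field `𝔽_q[T]/(π)` evaluated at the image of `f`. -/
noncomputable def polyJacobiSym {F : Type*} [Field F] [Fintype F] [DecidableEq F]
    (f N : F[X]) : ℤ :=
  ∏ π ∈ (UniqueFactorizationMonoid.normalizedFactors N).toFinset, polyLegendreSym π f

/-!
Euclidean division by `N` splits a monic `f` of degree `e` into a monic quotient of degree
`e - deg N` and a remainder of degree `< deg N`, and `(f/N)` only depends on the remainder.
By the Chinese remainder theorem the remainders correspond bijectively to tuples of residues in
the fields `𝔽_q[T]/(π)`, `π ∣ N`, and `(·/N)` becomes the product of their quadratic characters.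
So the sum over remainders is the product of the complete sums of these characters, each of
which vanishes because `q` is odd.
-/

namespace Polynomial

section Semiring

variable {R : Type*} [Semiring R]

theorem finite_setOf_degree_lt [Finite R] (n : ℕ) : {p : R[X] | p.degree < n}.Finite := by
  have : Finite (degreeLT R n) := .of_equiv _ (degreeLTEquiv R n).toEquiv.symm
  exact Set.toFinite (degreeLT R n : Set R[X]) |>.subset fun p hp => mem_degreeLT.mpr hp

theorem finite_setOf_monic_natDegree_eq [Finite R] (n : ℕ) :
    {p : R[X] | p.Monic ∧ p.natDegree = n}.Finite :=
  (finite_setOf_degree_lt (n + 1)).subset fun p hp =>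
    (degree_le_natDegree.trans_lt (by rw [hp.2]; exact_mod_cast n.lt_succ_self))

end Semiring

theorem bijOn_divByMonic_modByMonic {R : Type*} [CommRing R] [Nontrivial R] {N : R[X]} (hN : N.Monic) {e : ℕ}
    (he : N.natDegree ≤ e) :
    Set.BijOn (fun f => (f /ₘ N, f %ₘ N)) {f | f.Monic ∧ f.natDegree = e}
      ({q | q.Monic ∧ q.natDegree = e - N.natDegree} ×ˢ {r | r.degree < N.degree}) := by
  refine ⟨fun f ⟨hfm, hfd⟩ => ⟨⟨?_, ?_⟩, degree_modByMonic_lt f hN⟩, ?_, ?_⟩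
  · have hdeg : N.degree ≤ f.degree := by
      rw [degree_eq_natDegree hN.ne_zero, degree_eq_natDegree hfm.ne_zero, hfd]
      exact_mod_cast he
    rw [Monic, leadingCoeff_divByMonic_of_monic hN hdeg, hfm]
  · rw [natDegree_divByMonic f hN, hfd]
  · intro f _ g _ h
    simp only [Prod.mk.injEq] at h
    rw [← modByMonic_add_div f N, ← modByMonic_add_div g N, h.1, h.2]
  · rintro ⟨q, r⟩ ⟨⟨hqm, hqd⟩, hr⟩
    have hqN : (q * N).natDegree = e := by rw [hqm.natDegree_mul hN, hqd]; omega
    have hlt : r.degree < (q * N).degree := by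
      rw [degree_eq_natDegree (hqm.mul hN).ne_zero, hqN]
      exact hr.trans_le (by rw [degree_eq_natDegree hN.ne_zero]; exact_mod_cast he)
    refine ⟨q * N + r, ⟨(hqm.mul hN).add_of_left hlt, ?_⟩, ?_⟩
    · rw [natDegree_add_eq_left_of_degree_lt hlt, hqN]
    · obtain ⟨h1, h2⟩ := div_modByMonic_unique (f := q * N + r) q r hN ⟨by ring, hr⟩
      exact Prod.ext h1 h2

end Polynomial

section NormalizedFactors

open UniqueFactorizationMonoid

variable {R : Type*} [CommRing R] [IsDomain R] [IsPrincipalIdealRing R] [NormalizationMonoid R]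

theorem isCoprime_of_mem_normalizedFactors {a p q : R} (hp : p ∈ normalizedFactors a)
    (hq : q ∈ normalizedFactors a) (hpq : p ≠ q) : IsCoprime p q := by
  refine (irreducible_of_normalized_factor p hp).coprime_iff_not_dvd.mpr fun hdvd => hpq ?_
  exact ((irreducible_of_normalized_factor p hp).associated_of_dvd
    (irreducible_of_normalized_factor q hq) hdvd).eq_of_normalized
    (normalize_normalized_factor p hp) (normalize_normalized_factor q hq)

theorem Squarefree.dvd_of_forall_mem_normalizedFactors_dvd {a b : R}
    (ha : Squarefree a) (h : ∀ p ∈ normalizedFactors a, p ∣ b) : a ∣ b := by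
  classical
  have hnodup := (squarefree_iff_nodup_normalizedFactors ha.ne_zero).mp ha
  have hprod : ∏ p ∈ (normalizedFactors a).toFinset, p = (normalizedFactors a).prod := by
    rw [Finset.prod_eq_multiset_prod, Multiset.toFinset_val, hnodup.dedup, Multiset.map_id']
  rw [← (prod_normalizedFactors ha.ne_zero).dvd_iff_dvd_left, ← hprod]
  refine Finset.prod_dvd_of_coprime (fun p hp q hq hpq => ?_) fun p hp => h p ?_
  · exact isCoprime_of_mem_normalizedFactors (Multiset.mem_toFinset.mp hp)
      (Multiset.mem_toFinset.mp hq) hpq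
  · exact Multiset.mem_toFinset.mp hp

end NormalizedFactors

namespace Polynomial

open UniqueFactorizationMonoid Function

variable {F : Type*} [Field F]

theorem bijOn_adjoinRoot_normalizedFactors [DecidableEq F] {N : F[X]} (hN : Squarefree N) :
    Set.BijOn (fun r (p : (normalizedFactors N).toFinset) => AdjoinRoot.mk p.1 r)
      {r | r.degree < N.degree} Set.univ := by
  refine ⟨fun _ _ => Set.mem_univ _, fun r hr s hs hrs => ?_, fun y _ => ?_⟩
  · have hdvd : N ∣ r - s := hN.dvd_of_forall_mem_normalizedFactors_dvd fun p hp =>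
      AdjoinRoot.mk_eq_mk.mp (congrFun hrs ⟨p, Multiset.mem_toFinset.mpr hp⟩)
    exact sub_eq_zero.mp (eq_zero_of_dvd_of_degree_lt hdvd
      ((degree_sub_le r s).trans_lt (max_lt hr hs)))
  · have hcoprime : Pairwise (IsCoprime on fun p : (normalizedFactors N).toFinset =>
        Ideal.span {p.1}) := fun p q hpq => by
      refine Ideal.isCoprime_span_singleton_iff _ _ |>.mpr ?_
      exact isCoprime_of_mem_normalizedFactors (Multiset.mem_toFinset.mp p.2)
        (Multiset.mem_toFinset.mp q.2) (Subtype.coe_injective.ne hpq)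
    obtain ⟨g, hg⟩ := Ideal.pi_quotient_surjective hcoprime y
    refine ⟨g % N, degree_mod_lt g hN.ne_zero, ?_⟩
    funext p
    rw [← hg p]
    refine AdjoinRoot.mk_eq_mk.mpr <|
      (dvd_of_mem_normalizedFactors (Multiset.mem_toFinset.mp p.2)).trans ?_
    exact ⟨-(g / N), by rw [EuclideanDomain.mod_eq_sub_mul_div]; ring⟩

end Polynomial

theorem sum_prod_quadraticChar_eq_zero {ι : Type*} [Fintype ι] [DecidableEq ι]
    [Nonempty ι] {K : ι → Type*} [∀ i, Field (K i)] [∀ i, Fintype (K i)]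
    [∀ i, DecidableEq (K i)] (hK : ∀ i, ringChar (K i) ≠ 2) :
    ∑ y : ∀ i, K i, ∏ i, quadraticChar (K i) (y i) = 0 := by
  rw [← Fintype.prod_sum]
  obtain ⟨i⟩ := ‹Nonempty ι›
  exact Finset.prod_eq_zero (Finset.mem_univ i) (quadraticChar_sum_zero (hK i))

theorem finsum_mem_prod {α β M : Type*} [AddCommMonoid M] {s : Set α} {t : Set β}
    (hs : s.Finite) (ht : t.Finite) (f : α × β → M) :
    ∑ᶠ p ∈ s ×ˢ t, f p = ∑ᶠ a ∈ s, ∑ᶠ b ∈ t, f (a, b) := by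
  rw [finsum_mem_eq_finite_toFinset_sum _ (hs.prod ht), ← Set.Finite.toFinset_prod hs ht,
    Finset.sum_product, finsum_mem_eq_finite_toFinset_sum _ hs]
  exact Finset.sum_congr rfl fun a _ => (finsum_mem_eq_finite_toFinset_sum _ ht).symm

section Jacobi

open Polynomial UniqueFactorizationMonoid

variable {F : Type*} [Field F] [Fintype F]

theorem polyLegendreSym_congr {π f g : F[X]} (h : π ∣ f - g) :
    polyLegendreSym π f = polyLegendreSym π g := by
  rw [polyLegendreSym, polyLegendreSym,
    Ideal.Quotient.eq.mpr (Ideal.mem_span_singleton.mpr h)]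

theorem polyJacobiSym_congr [DecidableEq F] {N f g : F[X]} (h : N ∣ f - g) :
    polyJacobiSym f N = polyJacobiSym g N :=
  Finset.prod_congr rfl fun _ hπ => polyLegendreSym_congr <|
    (dvd_of_mem_normalizedFactors (Multiset.mem_toFinset.mp hπ)).trans h

theorem polyLegendreSym_eq_quadraticChar {π : F[X]} [Fact (Irreducible π)]
    [Fintype (AdjoinRoot π)] [DecidableEq (AdjoinRoot π)] (f : F[X]) :
    polyLegendreSym π f = quadraticChar (AdjoinRoot π) (AdjoinRoot.mk π f) := by
  rw [quadraticChar_apply, quadraticCharFun, polyLegendreSym]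
  congr

theorem finsum_polyJacobiSym_degree_lt_eq_zero [DecidableEq F] (hq : Odd (Fintype.card F))
    {N : F[X]} (hN : Squarefree N) (hNu : ¬IsUnit N) :
    ∑ᶠ r ∈ {r : F[X] | r.degree < N.degree}, polyJacobiSym r N = 0 := by
  classical
  set T := (normalizedFactors N).toFinset
  have (p : T) : Fact (Irreducible p.1) :=
    ⟨irreducible_of_normalized_factor _ (Multiset.mem_toFinset.mp p.2)⟩
  have (p : T) : Fintype (AdjoinRoot p.1) :=
    have := (AdjoinRoot.powerBasis (Fact.out : Irreducible p.1).ne_zero).finite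
    have := Module.finite_of_finite F (M := AdjoinRoot p.1)
    Fintype.ofFinite _
  have : Nonempty T := by
    obtain ⟨p, hp⟩ := exists_mem_normalizedFactors hN.ne_zero hNu
    exact ⟨⟨p, Multiset.mem_toFinset.mpr hp⟩⟩
  have hchar (p : T) : ringChar (AdjoinRoot p.1) ≠ 2 := by
    rw [← Algebra.ringChar_eq F, Ne, FiniteField.even_card_iff_char_two, ← Nat.even_iff]
    exact Nat.not_even_iff_odd.mpr hq
  rw [finsum_mem_eq_of_bijOn _ (bijOn_adjoinRoot_normalizedFactors hN)
    (g := fun y => ∏ p, quadraticChar _ (y p)), finsum_mem_univ, finsum_eq_sum_of_fintype]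
  · exact sum_prod_quadraticChar_eq_zero hchar
  · intro r _
    rw [polyJacobiSym, ← Finset.prod_coe_sort]
    exact Finset.prod_congr rfl fun p _ => polyLegendreSym_eq_quadraticChar r

end Jacobi

/-- Let `𝔽_q` be a finite field of odd cardinality `q` and let `N ∈ 𝔽_q[T]`
be monic, squarefree, of degree `≥ 1`. Then for every natural number `e` with `e ≥ deg N`, the
complete character sum `B_e = ∑_{f monic, deg f = e} (f/N)` over all monic polynomials
`f ∈ 𝔽_q[T]` of degree `e` vanishes: `B_e = 0`. -/
theorem stmt_9 (F : Type*) [Field F] [Fintype F] [DecidableEq F]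
    (hq : Odd (Fintype.card F))
    (N : F[X]) (hN : N.Monic) (hNsf : Squarefree N) (hNdeg : 1 ≤ N.natDegree)
    (e : ℕ) (he : N.natDegree ≤ e) :
    ∑ᶠ f ∈ {f : F[X] | f.Monic ∧ f.natDegree = e}, polyJacobiSym f N = 0 := by
  have hNu : ¬IsUnit N := fun h => by
    have := natDegree_eq_zero_of_isUnit h
    omega
  rw [finsum_mem_eq_of_bijOn _ (bijOn_divByMonic_modByMonic hN he)
      (g := fun p => polyJacobiSym p.2 N)
      (fun f _ => (polyJacobiSym_congr (dvd_modByMonic_sub f N)).symm),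
    finsum_mem_prod (finite_setOf_monic_natDegree_eq _)
      ((finite_setOf_degree_lt N.natDegree).subset fun r hr => hr.trans_le degree_le_natDegree)]
  simp only [finsum_polyJacobiSym_degree_lt_eq_zero hq hNsf hNu, finsum_zero]
end
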